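/- Let a < b, ε > 0, τ > 0, let F : ℝ → ℝ be continuously differentiable with f := −F', and let g : ℝ → ℝ be continuous with g(s) ≥ σ > 0 for all s. Let u ∈ C²([a,b]×[0,∞)) satisfy τ·u_tt + g(u)·u_t = ε²·u_xx + f(u) with Neumann boundary conditions u_x(a,t) = u_x(b,t) = 0 for all t > 0, and define E[u,u_t](t) := ∫_a^b [ (τ/2)·u_t(x,t)² + (ε²/2)·u_x(x,t)² + F(u(x,t)) ] dx. Then for every 0 ≤ T₁ ≤ T₂: E[u,u_t](T₁) − E[u,u_t](T₂) ≥ σ·∫_{T₁}^{T₂} ∫_a^b u_t(x,t)² dx dt ≥ 0; in particular t ↦ E[u,u_t](t) is nonincreasing. -/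

import Mathlib

/-!
Multiplying the equation by `u_t` gives the local energy identity
`∂ₜ e = ε² ∂ₓ(u_x u_t) - g(u) u_t²` for the energy density `e`. Integrating it over
`[a, b] × [T₁, T₂]`, the flux term drops out by the Neumann condition, so
`E(T₁) - E(T₂) = ∫∫ g(u) u_t² ≥ σ ∫∫ u_t²`. The equality of the mixed partials `u_xt = u_tx`,
needed for the time derivative of `u_x²/2`, is where the `C²` hypothesis enters.
-/

open MeasureTheory intervalIntegral

/-- The energy `E[u,u_t](t) := ∫_a^b [ (τ/2) u_t² + (ε²/2) u_x² + F(u) ] dx`. -/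
noncomputable def classicalEnergy (F : ℝ → ℝ) (τ ε a b : ℝ)
    (ux ut : ℝ → ℝ → ℝ) (u : ℝ → ℝ → ℝ) (t : ℝ) : ℝ :=
  ∫ x in a..b, τ / 2 * (ut x t) ^ 2 + ε ^ 2 / 2 * (ux x t) ^ 2 + F (u x t)

open Set Function

section PartialDerivatives

variable {E : Type*} [NormedAddCommGroup E] [NormedSpace ℝ E] {I J : Set ℝ} {x t : ℝ}

theorem HasFDerivWithinAt.hasDerivWithinAt_fst_slice {G : ℝ × ℝ → E} {G' : ℝ × ℝ →L[ℝ] E}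
    (hG : HasFDerivWithinAt G G' (I ×ˢ J) (x, t)) (ht : t ∈ J) :
    HasDerivWithinAt (fun y => G (y, t)) (G' (1, 0)) I x :=
  hG.comp_hasDerivWithinAt x ((hasDerivAt_id x).prodMk (hasDerivAt_const x t)).hasDerivWithinAt
    fun _ hy => mk_mem_prod hy ht

theorem HasFDerivWithinAt.hasDerivWithinAt_snd_slice {G : ℝ × ℝ → E} {G' : ℝ × ℝ →L[ℝ] E}
    (hG : HasFDerivWithinAt G G' (I ×ˢ J) (x, t)) (hx : x ∈ I) :
    HasDerivWithinAt (fun s => G (x, s)) (G' (0, 1)) J t :=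
  hG.comp_hasDerivWithinAt t ((hasDerivAt_const t x).prodMk (hasDerivAt_id t)).hasDerivWithinAt
    fun _ hs => mk_mem_prod hx hs

theorem ContDiffOn.fderivWithin_apply_comm {F : Type*} [NormedAddCommGroup F] [NormedSpace ℝ F]
    {f : E → F} {s : Set E} {p : E} (hf : ContDiffOn ℝ 2 f s) (hs : UniqueDiffOn ℝ s)
    (hp : p ∈ closure (interior s)) (h'p : p ∈ s) (v w : E) :
    fderivWithin ℝ (fun q => fderivWithin ℝ f s q v) s p w
      = fderivWithin ℝ (fun q => fderivWithin ℝ f s q w) s p v := by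
  have hdf : DifferentiableWithinAt ℝ (fderivWithin ℝ f s) s p :=
    ((hf.fderivWithin hs (by norm_num)).differentiableOn one_ne_zero) p h'p
  rw [fderivWithin_clm_apply (hs p h'p) hdf (differentiableWithinAt_const v),
    fderivWithin_clm_apply (hs p h'p) hdf (differentiableWithinAt_const w)]
  simpa using (hf p h'p).isSymmSndFDerivWithinAt (by simp) hs hp h'p w v

variable {u ux ut : ℝ → ℝ → ℝ}

theorem eqOn_fderivWithin_apply_fst (hu : DifferentiableOn ℝ (uncurry u) (I ×ˢ J))
    (hI : UniqueDiffOn ℝ I)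
    (hux : ∀ x ∈ I, ∀ t ∈ J, HasDerivWithinAt (fun y => u y t) (ux x t) I x) :
    EqOn (uncurry ux) (fun p => fderivWithin ℝ (uncurry u) (I ×ˢ J) p (1, 0)) (I ×ˢ J) :=
  fun ⟨x, t⟩ ⟨hx, ht⟩ => (hI x hx).eq_deriv _ (hux x hx t ht)
    ((hu _ ⟨hx, ht⟩).hasFDerivWithinAt.hasDerivWithinAt_fst_slice ht)

theorem eqOn_fderivWithin_apply_snd (hu : DifferentiableOn ℝ (uncurry u) (I ×ˢ J))
    (hJ : UniqueDiffOn ℝ J)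
    (hut : ∀ x ∈ I, ∀ t ∈ J, HasDerivWithinAt (fun s => u x s) (ut x t) J t) :
    EqOn (uncurry ut) (fun p => fderivWithin ℝ (uncurry u) (I ×ˢ J) p (0, 1)) (I ×ˢ J) :=
  fun ⟨x, t⟩ ⟨hx, ht⟩ => (hJ t ht).eq_deriv _ (hut x hx t ht)
    ((hu _ ⟨hx, ht⟩).hasFDerivWithinAt.hasDerivWithinAt_snd_slice hx)

theorem ContDiffOn.contDiffOn_partial_fst {m n : WithTop ℕ∞}
    (hu : ContDiffOn ℝ n (uncurry u) (I ×ˢ J)) (hmn : m + 1 ≤ n)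
    (hI : UniqueDiffOn ℝ I) (hJ : UniqueDiffOn ℝ J)
    (hux : ∀ x ∈ I, ∀ t ∈ J, HasDerivWithinAt (fun y => u y t) (ux x t) I x) :
    ContDiffOn ℝ m (uncurry ux) (I ×ˢ J) :=
  ((hu.fderivWithin (hI.prod hJ) hmn).clm_apply contDiffOn_const).congr
    (eqOn_fderivWithin_apply_fst (hu.differentiableOn (ne_bot_of_le_ne_bot (by simp) hmn)) hI hux)

theorem ContDiffOn.contDiffOn_partial_snd {m n : WithTop ℕ∞}
    (hu : ContDiffOn ℝ n (uncurry u) (I ×ˢ J)) (hmn : m + 1 ≤ n)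
    (hI : UniqueDiffOn ℝ I) (hJ : UniqueDiffOn ℝ J)
    (hut : ∀ x ∈ I, ∀ t ∈ J, HasDerivWithinAt (fun s => u x s) (ut x t) J t) :
    ContDiffOn ℝ m (uncurry ut) (I ×ˢ J) :=
  ((hu.fderivWithin (hI.prod hJ) hmn).clm_apply contDiffOn_const).congr
    (eqOn_fderivWithin_apply_snd (hu.differentiableOn (ne_bot_of_le_ne_bot (by simp) hmn)) hJ hut)

theorem ContDiffOn.exists_mixed_partial (hu : ContDiffOn ℝ 2 (uncurry u) (I ×ˢ J))
    (hI : UniqueDiffOn ℝ I) (hJ : UniqueDiffOn ℝ J)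
    (hIJ : I ×ˢ J ⊆ closure (interior (I ×ˢ J)))
    (hux : ∀ x ∈ I, ∀ t ∈ J, HasDerivWithinAt (fun y => u y t) (ux x t) I x)
    (hut : ∀ x ∈ I, ∀ t ∈ J, HasDerivWithinAt (fun s => u x s) (ut x t) J t) :
    ∃ uxt : ℝ → ℝ → ℝ, ContinuousOn (uncurry uxt) (I ×ˢ J) ∧
      (∀ x ∈ I, ∀ t ∈ J, HasDerivWithinAt (fun s => ux x s) (uxt x t) J t) ∧
      (∀ x ∈ I, ∀ t ∈ J, HasDerivWithinAt (fun y => ut y t) (uxt x t) I x) := by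
  have hux1 : ContDiffOn ℝ 1 (uncurry ux) (I ×ˢ J) :=
    hu.contDiffOn_partial_fst (by norm_num) hI hJ hux
  have hut1 : ContDiffOn ℝ 1 (uncurry ut) (I ×ˢ J) :=
    hu.contDiffOn_partial_snd (by norm_num) hI hJ hut
  refine ⟨fun x t => fderivWithin ℝ (uncurry ux) (I ×ˢ J) (x, t) (0, 1), ?_, ?_, ?_⟩
  · exact (hux1.continuousOn_fderivWithin (hI.prod hJ) le_rfl).clm_apply continuousOn_const
  · intro x hx t ht
    exact (hux1.differentiableOn one_ne_zero _ ⟨hx, ht⟩).hasFDerivWithinAt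
      |>.hasDerivWithinAt_snd_slice hx
  · intro x hx t ht
    have hp : (x, t) ∈ I ×ˢ J := ⟨hx, ht⟩
    have hdu := hu.differentiableOn two_ne_zero
    refine ((hut1.differentiableOn one_ne_zero _ hp).hasFDerivWithinAt.hasDerivWithinAt_fst_slice
      ht).congr_deriv ?_
    dsimp only
    rw [fderivWithin_congr' (eqOn_fderivWithin_apply_fst hdu hI hux) hp,
      fderivWithin_congr' (eqOn_fderivWithin_apply_snd hdu hJ hut) hp]
    exact hu.fderivWithin_apply_comm (hI.prod hJ) (hIJ hp) hp _ _

end PartialDerivatives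

section RectangleIntegrals

variable {E : Type*} [NormedAddCommGroup E] {a b c d : ℝ}

theorem ContinuousOn.integrableOn_Ioc_prod_Ioc {f : ℝ × ℝ → E}
    (hf : ContinuousOn f (Icc a b ×ˢ Icc c d)) : IntegrableOn f (Ioc a b ×ˢ Ioc c d) :=
  (hf.integrableOn_compact (isCompact_Icc.prod isCompact_Icc)).mono_set
    (prod_mono Ioc_subset_Icc_self Ioc_subset_Icc_self)

theorem ContinuousOn.intervalIntegral_intervalIntegral_swap [NormedSpace ℝ E] {f : ℝ → ℝ → E}
    (hab : a ≤ b) (hcd : c ≤ d) (hf : ContinuousOn (uncurry f) (Icc a b ×ˢ Icc c d)) :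
    ∫ x in a..b, ∫ t in c..d, f x t = ∫ t in c..d, ∫ x in a..b, f x t :=
  MeasureTheory.intervalIntegral_intervalIntegral_swap <| by
    rw [uIoc_of_le hab, uIoc_of_le hcd]
    exact hf.integrableOn_Ioc_prod_Ioc

theorem ContinuousOn.intervalIntegrable_intervalIntegral [NormedSpace ℝ E] {f : ℝ → ℝ → E}
    (hab : a ≤ b) (hcd : c ≤ d) (hf : ContinuousOn (uncurry f) (Icc a b ×ˢ Icc c d)) :
    IntervalIntegrable (fun t => ∫ x in a..b, f x t) volume c d := by
  have h := hf.integrableOn_Ioc_prod_Ioc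
  rw [IntegrableOn, Measure.volume_eq_prod, ← Measure.prod_restrict] at h
  simp_rw [intervalIntegrable_iff_integrableOn_Ioc_of_le hcd, integral_of_le hab]
  exact h.integral_prod_right

theorem intervalIntegral_intervalIntegral_mono_on {f g : ℝ → ℝ → ℝ} (hab : a ≤ b) (hcd : c ≤ d)
    (hf : ContinuousOn (uncurry f) (Icc a b ×ˢ Icc c d))
    (hg : ContinuousOn (uncurry g) (Icc a b ×ˢ Icc c d))
    (hfg : ∀ x ∈ Icc a b, ∀ t ∈ Icc c d, f x t ≤ g x t) :
    ∫ t in c..d, ∫ x in a..b, f x t ≤ ∫ t in c..d, ∫ x in a..b, g x t :=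
  integral_mono_on hcd (hf.intervalIntegrable_intervalIntegral hab hcd)
    (hg.intervalIntegrable_intervalIntegral hab hcd) fun t ht =>
    integral_mono_on hab ((hf.uncurry_right t ht).intervalIntegrable_of_Icc hab)
      ((hg.uncurry_right t ht).intervalIntegrable_of_Icc hab) fun x hx => hfg x hx t ht

theorem integral_sub_integral_eq_of_balance_law {e q r D : ℝ → ℝ → ℝ} (hab : a ≤ b) (hcd : c ≤ d)
    (he : ContinuousOn (uncurry e) (Icc a b ×ˢ Icc c d))
    (hr : ContinuousOn (uncurry r) (Icc a b ×ˢ Icc c d))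
    (hD : ContinuousOn (uncurry D) (Icc a b ×ˢ Icc c d))
    (hq : ∀ t ∈ Ioo c d, ContinuousOn (q · t) (Icc a b))
    (he' : ∀ x ∈ Icc a b, ∀ t ∈ Ioo c d, HasDerivAt (e x ·) (r x t - D x t) t)
    (hq' : ∀ x ∈ Ioo a b, ∀ t ∈ Ioo c d, HasDerivAt (q · t) (r x t) x)
    (hbc : ∀ t ∈ Ioo c d, q a t = q b t) :
    (∫ x in a..b, e x c) - ∫ x in a..b, e x d = ∫ t in c..d, ∫ x in a..b, D x t := by
  have hrD : ContinuousOn (uncurry fun x t => r x t - D x t) (Icc a b ×ˢ Icc c d) := hr.sub hD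
  have htime : ∀ x ∈ Icc a b, ∫ t in c..d, (r x t - D x t) = e x d - e x c := fun x hx =>
    integral_eq_sub_of_hasDerivAt_of_le hcd (he.uncurry_left x hx) (he' x hx)
      ((hrD.uncurry_left x hx).intervalIntegrable_of_Icc hcd)
  have hspace : ∀ t ∈ Ioo c d, ∫ x in a..b, (r x t - D x t) = -∫ x in a..b, D x t := by
    intro t ht
    have hrt : IntervalIntegrable (r · t) volume a b :=
      (hr.uncurry_right t (Ioo_subset_Icc_self ht)).intervalIntegrable_of_Icc hab
    have hDt : IntervalIntegrable (D · t) volume a b :=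
      (hD.uncurry_right t (Ioo_subset_Icc_self ht)).intervalIntegrable_of_Icc hab
    rw [integral_sub hrt hDt,
      integral_eq_sub_of_hasDerivAt_of_le hab (hq t ht) (fun x hx => hq' x hx t ht) hrt, hbc t ht,
      sub_self, zero_sub]
  have hec : IntervalIntegrable (e · c) volume a b :=
    (he.uncurry_right c (left_mem_Icc.2 hcd)).intervalIntegrable_of_Icc hab
  have hed : IntervalIntegrable (e · d) volume a b :=
    (he.uncurry_right d (right_mem_Icc.2 hcd)).intervalIntegrable_of_Icc hab
  calc (∫ x in a..b, e x c) - ∫ x in a..b, e x d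
      = -∫ x in a..b, (e x d - e x c) := by rw [integral_sub hed hec, neg_sub]
    _ = -∫ x in a..b, ∫ t in c..d, (r x t - D x t) := by
      rw [integral_congr fun x hx => (htime x (uIcc_of_le hab ▸ hx)).symm]
    _ = -∫ t in c..d, ∫ x in a..b, (r x t - D x t) := by
      rw [hrD.intervalIntegral_intervalIntegral_swap hab hcd]
    _ = ∫ t in c..d, ∫ x in a..b, D x t := by
      rw [integral_congr_Ioo_of_le hcd hspace, intervalIntegral.integral_neg, neg_neg]

end RectangleIntegrals

section Energy

variable {F g : ℝ → ℝ} {τ ε a b : ℝ} {u ux ut uxx utt uxt : ℝ → ℝ → ℝ}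

noncomputable def energyDensity (F : ℝ → ℝ) (τ ε : ℝ) (ux ut u : ℝ → ℝ → ℝ) (x t : ℝ) : ℝ :=
  τ / 2 * (ut x t) ^ 2 + ε ^ 2 / 2 * (ux x t) ^ 2 + F (u x t)

theorem hasDerivAt_energyDensity {x t : ℝ} (hF : DifferentiableAt ℝ F (u x t))
    (hut : HasDerivAt (u x ·) (ut x t) t) (huxt : HasDerivAt (ux x ·) (uxt x t) t)
    (hutt : HasDerivAt (ut x ·) (utt x t) t)
    (hpde : τ * utt x t + g (u x t) * ut x t = ε ^ 2 * uxx x t + -(deriv F (u x t))) :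
    HasDerivAt (energyDensity F τ ε ux ut u x)
      (ε ^ 2 * (uxx x t * ut x t + ux x t * uxt x t) - g (u x t) * ut x t ^ 2) t := by
  refine ((((hutt.pow 2).const_mul (τ / 2)).add ((huxt.pow 2).const_mul (ε ^ 2 / 2))).add
    (hF.hasDerivAt.comp t hut)).congr_deriv ?_
  push_cast
  linear_combination ut x t * hpde

theorem classicalEnergy_sub_classicalEnergy (hab : a ≤ b) (hg : Continuous g)
    (hF : ContDiff ℝ 1 F)
    (hu_c : ContinuousOn (uncurry u) (Icc a b ×ˢ Ici 0))
    (hux_c : ContinuousOn (uncurry ux) (Icc a b ×ˢ Ici 0))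
    (hut_c : ContinuousOn (uncurry ut) (Icc a b ×ˢ Ici 0))
    (huxx_c : ContinuousOn (uncurry uxx) (Icc a b ×ˢ Ici 0))
    (huxt_c : ContinuousOn (uncurry uxt) (Icc a b ×ˢ Ici 0))
    (hut : ∀ x ∈ Icc a b, ∀ t ∈ Ici (0 : ℝ), HasDerivAt (u x ·) (ut x t) t)
    (huxx : ∀ x ∈ Icc a b, ∀ t ∈ Ici (0 : ℝ), HasDerivAt (ux · t) (uxx x t) x)
    (hutt : ∀ x ∈ Icc a b, ∀ t ∈ Ici (0 : ℝ), HasDerivAt (ut x ·) (utt x t) t)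
    (huxt : ∀ x ∈ Icc a b, ∀ t ∈ Ici (0 : ℝ), HasDerivWithinAt (ux x ·) (uxt x t) (Ici 0) t)
    (hutx : ∀ x ∈ Icc a b, ∀ t ∈ Ici (0 : ℝ), HasDerivWithinAt (ut · t) (uxt x t) (Icc a b) x)
    (hpde : ∀ x ∈ Icc a b, ∀ t ∈ Ici (0 : ℝ),
      τ * utt x t + g (u x t) * ut x t = ε ^ 2 * uxx x t + -(deriv F (u x t)))
    (hbc : ∀ t > (0 : ℝ), ux a t = 0 ∧ ux b t = 0) {T₁ T₂ : ℝ} (hT₁ : 0 ≤ T₁) (hT : T₁ ≤ T₂) :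
    classicalEnergy F τ ε a b ux ut u T₁ - classicalEnergy F τ ε a b ux ut u T₂
      = ∫ t in T₁..T₂, ∫ x in a..b, g (u x t) * ut x t ^ 2 := by
  have hR : Icc a b ×ˢ Icc T₁ T₂ ⊆ Icc a b ×ˢ Ici 0 :=
    prod_mono_right fun t ht => hT₁.trans ht.1
  have hpos : ∀ t ∈ Ioo T₁ T₂, 0 < t := fun t ht => hT₁.trans_lt ht.1
  refine integral_sub_integral_eq_of_balance_law (e := energyDensity F τ ε ux ut u)
    (q := fun x t => ε ^ 2 * (ux x t * ut x t))
    (r := fun x t => ε ^ 2 * (uxx x t * ut x t + ux x t * uxt x t))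
    (D := fun x t => g (u x t) * ut x t ^ 2)
    hab hT ?_ ?_ ?_ (fun t ht => ?_) (fun x hx t ht => ?_) (fun x hx t ht => ?_) fun t ht => ?_
  · exact (((continuousOn_const.mul (hut_c.pow 2)).add
      (continuousOn_const.mul (hux_c.pow 2))).add (hF.continuous.comp_continuousOn hu_c)).mono hR
  · exact (continuousOn_const.mul ((huxx_c.mul hut_c).add (hux_c.mul huxt_c))).mono hR
  · exact ((hg.comp_continuousOn hu_c).mul (hut_c.pow 2)).mono hR
  · exact continuousOn_const.mul
      ((hux_c.uncurry_right t (hpos t ht).le).mul (hut_c.uncurry_right t (hpos t ht).le))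
  · exact hasDerivAt_energyDensity (hF.differentiable one_ne_zero _) (hut x hx t (hpos t ht).le)
      ((huxt x hx t (hpos t ht).le).hasDerivAt (Ici_mem_nhds (hpos t ht)))
      (hutt x hx t (hpos t ht).le) (hpde x hx t (hpos t ht).le)
  · have hx' := Ioo_subset_Icc_self hx
    exact ((huxx x hx' t (hpos t ht).le).mul
      ((hutx x hx' t (hpos t ht).le).hasDerivAt (Icc_mem_nhds hx.1 hx.2))).const_mul _
  · simp [(hbc t (hpos t ht)).1, (hbc t (hpos t ht)).2]

theorem mul_integral_integral_sq_le {σ T₁ T₂ : ℝ} (hab : a ≤ b) (hT : T₁ ≤ T₂)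
    (hg : Continuous g) (hglb : ∀ s, σ ≤ g s)
    (hu_c : ContinuousOn (uncurry u) (Icc a b ×ˢ Icc T₁ T₂))
    (hut_c : ContinuousOn (uncurry ut) (Icc a b ×ˢ Icc T₁ T₂)) :
    σ * (∫ t in T₁..T₂, ∫ x in a..b, ut x t ^ 2)
      ≤ ∫ t in T₁..T₂, ∫ x in a..b, g (u x t) * ut x t ^ 2 := by
  rw [← intervalIntegral.integral_const_mul]
  simp_rw [← intervalIntegral.integral_const_mul]
  exact intervalIntegral_intervalIntegral_mono_on hab hT (continuousOn_const.mul (hut_c.pow 2))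
    ((hg.comp_continuousOn hu_c).mul (hut_c.pow 2))
    fun x _ t _ => mul_le_mul_of_nonneg_right (hglb _) (sq_nonneg _)

end Energy

theorem energy_dissipation_general
    (a b ε τ σ : ℝ) (hab : a < b) (hσ : 0 < σ)
    (g F : ℝ → ℝ) (hg : Continuous g) (hglb : ∀ s, σ ≤ g s) (hF : ContDiff ℝ 1 F)
    (u ux ut uxx utt : ℝ → ℝ → ℝ)
    (hC2 : ContDiffOn ℝ 2 (fun p : ℝ × ℝ => u p.1 p.2)
      (Set.Icc a b ×ˢ Set.Ici 0))
    (hux : ∀ x ∈ Set.Icc a b, ∀ t ∈ Set.Ici (0:ℝ),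
      HasDerivAt (fun y => u y t) (ux x t) x)
    (hut : ∀ x ∈ Set.Icc a b, ∀ t ∈ Set.Ici (0:ℝ),
      HasDerivAt (fun s => u x s) (ut x t) t)
    (huxx : ∀ x ∈ Set.Icc a b, ∀ t ∈ Set.Ici (0:ℝ),
      HasDerivAt (fun y => ux y t) (uxx x t) x)
    (hutt : ∀ x ∈ Set.Icc a b, ∀ t ∈ Set.Ici (0:ℝ),
      HasDerivAt (fun s => ut x s) (utt x t) t)
    (hpde : ∀ x ∈ Set.Icc a b, ∀ t ∈ Set.Ici (0:ℝ),
      τ * utt x t + g (u x t) * ut x t = ε ^ 2 * uxx x t + -(deriv F (u x t)))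
    (hbc : ∀ t > (0:ℝ), ux a t = 0 ∧ ux b t = 0) :
    (∀ T₁ T₂ : ℝ, 0 ≤ T₁ → T₁ ≤ T₂ →
      σ * (∫ t in T₁..T₂, ∫ x in a..b, (ut x t) ^ 2)
          ≤ classicalEnergy F τ ε a b ux ut u T₁
            - classicalEnergy F τ ε a b ux ut u T₂ ∧
      0 ≤ σ * ∫ t in T₁..T₂, ∫ x in a..b, (ut x t) ^ 2) ∧
    AntitoneOn (classicalEnergy F τ ε a b ux ut u) (Set.Ici 0) := by
  have hI : UniqueDiffOn ℝ (Icc a b) := uniqueDiffOn_Icc hab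
  have hJ : UniqueDiffOn ℝ (Ici (0 : ℝ)) := uniqueDiffOn_Ici 0
  have hQ : Icc a b ×ˢ Ici 0 ⊆ closure (interior (Icc a b ×ˢ Ici (0 : ℝ))) := by
    rw [interior_prod_eq, interior_Icc, interior_Ici, closure_prod_eq, closure_Ioo hab.ne,
      closure_Ioi]
  have hux' := fun x hx t ht => (hux x hx t ht).hasDerivWithinAt (s := Icc a b)
  have hut' := fun x hx t ht => (hut x hx t ht).hasDerivWithinAt (s := Ici 0)
  have hux1 := hC2.contDiffOn_partial_fst (m := 1) (by norm_num) hI hJ hux'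
  have hut1 := hC2.contDiffOn_partial_snd (m := 1) (by norm_num) hI hJ hut'
  have huxx0 := hux1.contDiffOn_partial_fst (m := 0) (by norm_num) hI hJ
    fun x hx t ht => (huxx x hx t ht).hasDerivWithinAt
  obtain ⟨uxt, huxt_c, huxt, hutx⟩ := hC2.exists_mixed_partial hI hJ hQ hux' hut'
  have hdiss : ∀ T₁ T₂ : ℝ, 0 ≤ T₁ → T₁ ≤ T₂ → σ * (∫ t in T₁..T₂, ∫ x in a..b, (ut x t) ^ 2)
      ≤ classicalEnergy F τ ε a b ux ut u T₁ - classicalEnergy F τ ε a b ux ut u T₂ := by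
    intro T₁ T₂ hT₁ hT
    have hR : Icc a b ×ˢ Icc T₁ T₂ ⊆ Icc a b ×ˢ Ici 0 :=
      prod_mono_right fun t ht => hT₁.trans ht.1
    rw [classicalEnergy_sub_classicalEnergy hab.le hg hF hC2.continuousOn hux1.continuousOn
      hut1.continuousOn huxx0.continuousOn huxt_c hut huxx hutt huxt hutx hpde hbc hT₁ hT]
    exact mul_integral_integral_sq_le hab.le hT hg hglb (hC2.continuousOn.mono hR)
      (hut1.continuousOn.mono hR)
  have hnonneg : ∀ T₁ T₂ : ℝ, T₁ ≤ T₂ → 0 ≤ σ * ∫ t in T₁..T₂, ∫ x in a..b, (ut x t) ^ 2 :=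
    fun T₁ T₂ hT => mul_nonneg hσ.le <|
      integral_nonneg hT fun t _ => integral_nonneg hab.le fun x _ => sq_nonneg _
  refine ⟨fun T₁ T₂ hT₁ hT => ⟨hdiss T₁ T₂ hT₁ hT, hnonneg T₁ T₂ hT⟩, fun T₁ hT₁ T₂ _ hT => ?_⟩
  linarith [hdiss T₁ T₂ hT₁ hT, hnonneg T₁ T₂ hT]

/-- Energy dissipation inequality: for a classical solution of
`τ u_tt + g(u) u_t = ε² u_xx + f(u)` (`f := -F'`, `g ≥ σ > 0`) on `[a,b] × [0,∞)`
with Neumann boundary conditions, for all `0 ≤ T₁ ≤ T₂`,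
`E(T₁) - E(T₂) ≥ σ ∫_{T₁}^{T₂} ∫_a^b u_t² ≥ 0`; in particular `E` is nonincreasing
on `[0,∞)`. -/
theorem energy_dissipation
    (a b ε τ σ : ℝ) (hab : a < b) (hε : 0 < ε) (hτ : 0 < τ) (hσ : 0 < σ)
    (g F : ℝ → ℝ) (hg : Continuous g) (hglb : ∀ s, σ ≤ g s) (hF : ContDiff ℝ 1 F)
    (u ux ut uxx utt : ℝ → ℝ → ℝ)
    (hC2 : ContDiffOn ℝ 2 (fun p : ℝ × ℝ => u p.1 p.2)
      (Set.Icc a b ×ˢ Set.Ici 0))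
    (hux : ∀ x ∈ Set.Icc a b, ∀ t ∈ Set.Ici (0:ℝ),
      HasDerivAt (fun y => u y t) (ux x t) x)
    (hut : ∀ x ∈ Set.Icc a b, ∀ t ∈ Set.Ici (0:ℝ),
      HasDerivAt (fun s => u x s) (ut x t) t)
    (huxx : ∀ x ∈ Set.Icc a b, ∀ t ∈ Set.Ici (0:ℝ),
      HasDerivAt (fun y => ux y t) (uxx x t) x)
    (hutt : ∀ x ∈ Set.Icc a b, ∀ t ∈ Set.Ici (0:ℝ),
      HasDerivAt (fun s => ut x s) (utt x t) t)
    (hpde : ∀ x ∈ Set.Icc a b, ∀ t ∈ Set.Ici (0:ℝ),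
      τ * utt x t + g (u x t) * ut x t = ε ^ 2 * uxx x t + -(deriv F (u x t)))
    (hbc : ∀ t > (0:ℝ), ux a t = 0 ∧ ux b t = 0) :
    (∀ T₁ T₂ : ℝ, 0 ≤ T₁ → T₁ ≤ T₂ →
      σ * (∫ t in T₁..T₂, ∫ x in a..b, (ut x t) ^ 2)
          ≤ classicalEnergy F τ ε a b ux ut u T₁
            - classicalEnergy F τ ε a b ux ut u T₂ ∧
      0 ≤ σ * ∫ t in T₁..T₂, ∫ x in a..b, (ut x t) ^ 2) ∧
    AntitoneOn (classicalEnergy F τ ε a b ux ut u) (Set.Ici 0) :=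
  energy_dissipation_general a b ε τ σ hab hσ g F hg hglb hF u ux ut uxx utt hC2 hux hut huxx hutt
    hpde hbc
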